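/- arXiv:2107.03355 — 2 statements merged into one kernel-verified Lean document; each statement's English description precedes it below -/
import Mathlib

section
/- Let X be a cocompact simply connected combinatorial G-2-complex. If the 1-skeleton of X is a fine graph, then the combinatorial Dehn function Δ_X of X takes only finite values. -/
/-! A combinatorial `G`-2-complex is modelled by its 1-skeleton, a simple graph `Γ` on a vertex
type `V`, together with a set `F` of 2-cells, each recorded by its boundary, a closed edge path
given as a list of directed edges (ordered pairs of adjacent vertices).  Combinatorial loops are
lists of consecutive directed edges; the combinatorial area of a loop is the least number of
2-cell moves (insertions/deletions of a boundary word of a face, read in either direction)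
needed, together with free moves (backtrack insertions/deletions and cyclic rotations), to reduce
the loop to the empty loop.  This is the standard van Kampen diagram description of the
combinatorial Dehn function. -/

variable {V : Type*}

/-- A directed edge. -/
abbrev DEdge (V : Type*) := V × V

/-- The reverse of a directed edge. -/
def dinv (e : DEdge V) : DEdge V := (e.2, e.1)

/-- `l` is a closed edge path (combinatorial loop) in the graph `Γ`. -/
def IsLoopIn (Γ : SimpleGraph V) (l : List (DEdge V)) : Prop :=
  (∀ e ∈ l, Γ.Adj e.1 e.2) ∧ List.Chain' (fun e f => e.2 = f.1) l ∧
    (∀ e ∈ l.head?, ∀ f ∈ l.getLast?, f.2 = e.1)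

/-- `l` is a circuit in `Γ`: a nonempty closed edge path visiting no vertex twice. -/
def IsCircuitIn (Γ : SimpleGraph V) (l : List (DEdge V)) : Prop :=
  IsLoopIn Γ l ∧ l ≠ [] ∧ (l.map Prod.fst).Nodup

/-- Free moves on edge words: insertion/deletion of a backtrack, and cyclic rotation. -/
inductive Move0 : List (DEdge V) → List (DEdge V) → Prop
  | cancel (a b : List (DEdge V)) (e : DEdge V) : Move0 (a ++ e :: dinv e :: b) (a ++ b)
  | insert (a b : List (DEdge V)) (e : DEdge V) : Move0 (a ++ b) (a ++ e :: dinv e :: b)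
  | rot (e : DEdge V) (l : List (DEdge V)) : Move0 (e :: l) (l ++ [e])
  | rot' (e : DEdge V) (l : List (DEdge V)) : Move0 (l ++ [e]) (e :: l)

/-- A boundary word of a face of `F`, read in either direction. -/
def FaceWord (F : Set (List (DEdge V))) (f : List (DEdge V)) : Prop :=
  f ∈ F ∨ f.reverse.map dinv ∈ F

/-- Face moves: insertion or deletion of the boundary word of a 2-cell. -/
inductive Move1 (F : Set (List (DEdge V))) : List (DEdge V) → List (DEdge V) → Prop
  | del (a b f : List (DEdge V)) : FaceWord F f → Move1 F (a ++ f ++ b) (a ++ b)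
  | ins (a b f : List (DEdge V)) : FaceWord F f → Move1 F (a ++ b) (a ++ f ++ b)

/-- `HasArea F l n`: the loop `l` bounds a disk diagram with `n` faces, i.e. `l` can be
reduced to the trivial loop using free moves and exactly `n` face moves. -/
inductive HasArea (F : Set (List (DEdge V))) : List (DEdge V) → ℕ → Prop
  | nil : HasArea F [] 0
  | free {l l' : List (DEdge V)} {n : ℕ} : Move0 l l' → HasArea F l' n → HasArea F l n
  | face {l l' : List (DEdge V)} {n : ℕ} : Move1 F l l' → HasArea F l' n → HasArea F l (n + 1)

/-- The 2-complex `(Γ, F)` is simply connected: every combinatorial loop is null-homotopic. -/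
def SimplyConnected2 (Γ : SimpleGraph V) (F : Set (List (DEdge V))) : Prop :=
  ∀ l, IsLoopIn Γ l → ∃ n, HasArea F l n

/-- The combinatorial Dehn function of `(Γ, F)` takes only finite values: circuits of bounded
length admit fillings of uniformly bounded area. -/
def DehnFiniteValues (Γ : SimpleGraph V) (F : Set (List (DEdge V))) : Prop :=
  ∀ n : ℕ, ∃ k : ℕ, ∀ l, IsCircuitIn Γ l → l.length ≤ n → ∃ m ≤ k, HasArea F l m

/-- The image of a directed-edge word under a group element. -/
def lsmul {G : Type*} [Group G] [MulAction G V] (g : G) (l : List (DEdge V)) :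
    List (DEdge V) := l.map fun e => (g • e.1, g • e.2)

/-- `(Γ, F)` is a cocompact `G`-2-complex: `G` acts on the vertices preserving adjacency and
the set of faces, with finitely many orbits of vertices, edges and faces. -/
structure IsCocompactG2Complex (G : Type*) [Group G] [MulAction G V]
    (Γ : SimpleGraph V) (F : Set (List (DEdge V))) : Prop where
  adj_smul : ∀ (g : G) (a b : V), Γ.Adj a b → Γ.Adj (g • a) (g • b)
  face_smul : ∀ (g : G), ∀ f ∈ F, lsmul g f ∈ F
  vertex_cocompact : ∃ s : Finset V, ∀ v : V, ∃ g : G, g • v ∈ s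
  edge_cocompact : ∃ s : Finset (V × V), ∀ a b : V, Γ.Adj a b → ∃ g : G, (g • a, g • b) ∈ s
  face_cocompact : ∃ s : Set (List (DEdge V)), s.Finite ∧ ∀ f ∈ F, ∃ g : G, lsmul g f ∈ s

/-- A simplicial graph is fine if every edge is contained in only finitely many circuits
(embedded cycles) of each bounded length. -/
def SimpleGraph.Fine {W : Type*} (Γ : SimpleGraph W) : Prop :=
  ∀ e ∈ Γ.edgeSet, ∀ n : ℕ,
    {c : (v : W) × Γ.Walk v v | c.2.IsCycle ∧ e ∈ c.2.edges ∧ c.2.length ≤ n}.Finite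

/-! Up to the action of `G` every edge lies in a fixed finite set, and by fineness only finitely
many circuits of length `≤ n` pass through a given edge. Hence the circuits of length `≤ n` fall
into finitely many `G`-orbits. Each of them bounds a disk diagram by simple connectivity, and
translation preserves area, so the largest area among finitely many orbit representatives bounds
the area of every circuit of length `≤ n`. -/

section Functoriality

variable {W : Type*} (f : V → W)

theorem Move0.map {l l' : List (DEdge V)} (h : Move0 l l') :
    Move0 (l.map (Prod.map f f)) (l'.map (Prod.map f f)) := by
  cases h with
  | cancel a b e =>
    simp only [List.map_append, List.map_cons]
    exact Move0.cancel _ _ (Prod.map f f e)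
  | insert a b e =>
    simp only [List.map_append, List.map_cons]
    exact Move0.insert _ _ (Prod.map f f e)
  | rot e l => simpa using Move0.rot (Prod.map f f e) (l.map (Prod.map f f))
  | rot' e l => simpa using Move0.rot' (Prod.map f f e) (l.map (Prod.map f f))

variable {F : Set (List (DEdge V))} {F' : Set (List (DEdge W))}

theorem FaceWord.map {w : List (DEdge V)}
    (hF : ∀ w ∈ F, w.map (Prod.map f f) ∈ F') (h : FaceWord F w) :
    FaceWord F' (w.map (Prod.map f f)) := by
  rcases h with h | h
  · exact .inl (hF w h)
  · refine .inr ?_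
    simpa [List.map_reverse, Function.comp_def, dinv] using hF _ h

theorem Move1.map {l l' : List (DEdge V)}
    (hF : ∀ w ∈ F, w.map (Prod.map f f) ∈ F') (h : Move1 F l l') :
    Move1 F' (l.map (Prod.map f f)) (l'.map (Prod.map f f)) := by
  cases h with
  | del a b w hw => simpa using Move1.del _ _ _ (hw.map f hF)
  | ins a b w hw => simpa using Move1.ins _ _ _ (hw.map f hF)

theorem HasArea.map {l : List (DEdge V)} {n : ℕ}
    (hF : ∀ w ∈ F, w.map (Prod.map f f) ∈ F') (h : HasArea F l n) :
    HasArea F' (l.map (Prod.map f f)) n := by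
  induction h with
  | nil => exact .nil
  | free h _ ih => exact .free (h.map f) ih
  | face h _ ih => exact .face (h.map f hF) ih

theorem IsLoopIn.map {Γ : SimpleGraph V} {Γ' : SimpleGraph W}
    (hf : ∀ a b, Γ.Adj a b → Γ'.Adj (f a) (f b)) {l : List (DEdge V)} (hl : IsLoopIn Γ l) :
    IsLoopIn Γ' (l.map (Prod.map f f)) := by
  obtain ⟨hadj, hchain, hclosed⟩ := hl
  refine ⟨?_, ?_, ?_⟩
  · simp only [List.mem_map]
    rintro _ ⟨e, he, rfl⟩
    exact hf _ _ (hadj e he)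
  · exact (List.isChain_map _).2 (hchain.imp fun e e' h => congrArg f h)
  · simp only [List.head?_map, List.getLast?_map, Option.mem_def, Option.map_eq_some_iff]
    rintro _ ⟨e, he, rfl⟩ _ ⟨e', he', rfl⟩
    exact congrArg f (hclosed e he e' he')

theorem IsCircuitIn.map {Γ : SimpleGraph V} {Γ' : SimpleGraph W} (hinj : Function.Injective f)
    (hf : ∀ a b, Γ.Adj a b → Γ'.Adj (f a) (f b)) {l : List (DEdge V)} (hl : IsCircuitIn Γ l) :
    IsCircuitIn Γ' (l.map (Prod.map f f)) := by
  obtain ⟨hloop, hne, hnd⟩ := hl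
  refine ⟨hloop.map f hf, by simpa using hne, ?_⟩
  simpa [List.map_map, Function.comp_def] using hnd.map hinj

end Functoriality

section Circuits

open SimpleGraph

variable {Γ : SimpleGraph V} {l : List (DEdge V)}

theorem IsLoopIn.exists_walk_darts (hl : IsLoopIn Γ l) (hne : l ≠ []) :
    ∃ (u : V) (w : Γ.Walk u u), w.darts.map Dart.toProd = l := by
  obtain ⟨hadj, hchain, hclosed⟩ := hl
  obtain ⟨ds, rfl⟩ : ∃ ds : List Γ.Dart, ds.map Dart.toProd = l :=
    ⟨l.pmap (fun e he => ⟨e, he⟩) hadj, by simp [List.map_pmap]⟩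
  have hne' : ds ≠ [] := by simpa using hne
  have hclose : (ds.getLast hne').snd = (ds.head hne').fst :=
    hclosed _ (by simp [List.head?_eq_some_head hne'])
      _ (by simp [List.getLast?_eq_some_getLast hne'])
  have hch : ds.IsChain Γ.DartAdj := (List.isChain_map Dart.toProd).1 hchain
  exact ⟨_, (Walk.ofDarts ds hne' hch).copy rfl hclose, by simp⟩

theorem IsCircuitIn.exists_isCycle (hl : IsCircuitIn Γ l) (h3 : 3 ≤ l.length) :
    ∃ c : (u : V) × Γ.Walk u u, c.2.IsCycle ∧ c.2.darts.map Dart.toProd = l := by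
  obtain ⟨u, w, hw⟩ := hl.1.exists_walk_darts hl.2.1
  have hlen : w.length = l.length := by rw [← w.length_darts, ← hw, List.length_map]
  have hnil : ¬ w.Nil := Walk.not_nil_iff_lt_length.2 (by omega)
  have hfst : (w.darts.map (·.fst)).Nodup := by
    simpa [← hw, List.map_map, Function.comp_def] using hl.2.2
  refine ⟨⟨u, w⟩, Walk.isCycle_iff_isPath_tail_and_le_length.2 ⟨.mk' ?_, hlen ▸ h3⟩, hw⟩
  rwa [w.support_tail_perm_support_dropLast.nodup_iff, w.support_dropLast hnil, ← w.map_fst_darts]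

theorem IsLoopIn.exists_eq_backtrack_of_length_le_two (hl : IsLoopIn Γ l) (hne : l ≠ [])
    (h2 : l.length ≤ 2) : ∃ e, l = [e, dinv e] := by
  obtain ⟨hadj, hchain, hclosed⟩ := hl
  match l, hne, h2 with
  | [e], _, _ => exact absurd (hclosed e rfl e rfl ▸ hadj e (by simp)) (Γ.loopless.irrefl _)
  | [e, e'], _, _ =>
    have h12 : e.2 = e'.1 := (List.isChain_cons_cons.1 hchain).1
    exact ⟨e, by rw [show e' = dinv e from Prod.ext h12.symm (hclosed e rfl e' rfl)]⟩

theorem SimpleGraph.Fine.finite_setOf_isCircuitIn (hfine : Γ.Fine) (e : DEdge V)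
    (n : ℕ) : {l | IsCircuitIn Γ l ∧ e ∈ l ∧ l.length ≤ n}.Finite := by
  by_cases he : Γ.Adj e.1 e.2
  swap
  · exact Set.finite_empty.subset fun l hl => he (hl.1.1.1 e hl.2.1)
  have hcycles : ((fun c : (u : V) × Γ.Walk u u => c.2.darts.map Dart.toProd) ''
      {c | c.2.IsCycle ∧ s(e.1, e.2) ∈ c.2.edges ∧ c.2.length ≤ n}).Finite :=
    (hfine _ he n).image _
  -- Mathlib's cycles have length at least 3; the circuits of length 2 are the backtracks.
  refine (hcycles.union (Set.toFinite {[e, dinv e], [dinv e, e]})).subset ?_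
  rintro l ⟨hl, hel, hn⟩
  rcases le_or_gt 3 l.length with h3 | h2
  · obtain ⟨c, hc, hdarts⟩ := hl.exists_isCycle h3
    have hedges : c.2.edges = l.map fun e => s(e.1, e.2) := by rw [← hdarts, List.map_map]; rfl
    refine .inl ⟨c, ⟨hc, hedges ▸ List.mem_map_of_mem hel, ?_⟩, hdarts⟩
    rwa [← c.2.length_darts, ← List.length_map Dart.toProd, hdarts]
  · obtain ⟨a, rfl⟩ := hl.1.exists_eq_backtrack_of_length_le_two hl.2.1 (by omega)
    simp only [List.mem_cons, List.not_mem_nil, or_false] at hel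
    rcases hel with rfl | rfl
    · exact .inr (.inl rfl)
    · exact .inr (.inr rfl)

end Circuits

theorem Set.Finite.exists_hasArea_le {F S : Set (List (DEdge V))} (hS : S.Finite)
    (h : ∀ l ∈ S, ∃ m, HasArea F l m) : ∃ k, ∀ l ∈ S, ∃ m ≤ k, HasArea F l m := by
  choose! A hA using h
  obtain ⟨k, hk⟩ := (hS.image A).bddAbove
  exact ⟨k, fun l hl => ⟨A l, hk ⟨l, hl, rfl⟩, hA l hl⟩⟩

section Action

variable {G : Type*} [Group G] [MulAction G V]

theorem lsmul_inv_lsmul (g : G) (l : List (DEdge V)) : lsmul g⁻¹ (lsmul g l) = l := by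
  simp [lsmul, Function.comp_def]

theorem HasArea.of_lsmul {F : Set (List (DEdge V))} (hF : ∀ g : G, ∀ f ∈ F, lsmul g f ∈ F)
    {g : G} {l : List (DEdge V)} {n : ℕ} (h : HasArea F (lsmul g l) n) : HasArea F l n :=
  lsmul_inv_lsmul g l ▸ h.map (g⁻¹ • ·) (hF g⁻¹)

end Action

/-- For a cocompact simply connected combinatorial `G`-2-complex, if the
1-skeleton is a fine graph then the combinatorial Dehn function takes only finite values. -/
theorem dehnFiniteValues_of_fine {G : Type*} [Group G] [MulAction G V]
    (Γ : SimpleGraph V) (F : Set (List (DEdge V)))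
    (hcc : IsCocompactG2Complex G Γ F)
    (hsc : SimplyConnected2 Γ F)
    (hfine : Γ.Fine) :
    DehnFiniteValues Γ F := by
  intro n
  obtain ⟨s, hs⟩ := hcc.edge_cocompact
  set S := ⋃ e ∈ s, {l | IsCircuitIn Γ l ∧ e ∈ l ∧ l.length ≤ n}
  have hS : S.Finite := s.finite_toSet.biUnion fun e _ => hfine.finite_setOf_isCircuitIn e n
  obtain ⟨k, hk⟩ := hS.exists_hasArea_le fun l hl => by
    obtain ⟨e, -, hl⟩ := Set.mem_iUnion₂.1 hl
    exact hsc l hl.1.1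
  refine ⟨k, fun l hl hlen => ?_⟩
  obtain ⟨e, he⟩ := List.exists_mem_of_ne_nil l hl.2.1
  obtain ⟨g, hg⟩ := hs e.1 e.2 (hl.1.1 e he)
  have hgl : lsmul g l ∈ S := Set.mem_biUnion hg
    ⟨hl.map (g • ·) (MulAction.injective g) (hcc.adj_smul g),
      List.mem_map_of_mem (f := Prod.map (g • ·) (g • ·)) he, by simpa [lsmul] using hlen⟩
  obtain ⟨m, hm, harea⟩ := hk _ hgl
  exact ⟨m, hm, harea.of_lsmul hcc.face_smul⟩
end

section
/- Let G be a group acting by automorphisms on a fine graph Γ with finite edge stabilisers, and let P be a collection of representatives of conjugacy classes of vertex stabilisers. Then P is an almost malnormal collection: for any two vertex-stabiliser representatives P, P' and g ∈ G, either gPg⁻¹ ∩ P' is finite, or P = P' and g ∈ P. -/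
open scoped Pointwise

variable {G : Type*} [Group G]

/-- Word distance between `g` and `h` with respect to a generating set `S` (values in `ℕ∞`). -/
noncomputable def wordDist (S : Set G) (g h : G) : ℕ∞ :=
  sInf {n : ℕ∞ | ∃ l : List G, (∀ x ∈ l, x ∈ S ∨ x⁻¹ ∈ S) ∧ l.prod = g⁻¹ * h ∧ (l.length : ℕ∞) = n}

/-- Closed `r`-neighbourhood of a subset of `G` in the word metric. -/
def nbhd (S : Set G) (r : ℕ∞) (A : Set G) : Set G := {g | ∃ a ∈ A, wordDist S g a ≤ r}

/-- Hausdorff distance between subsets of `G` in the word metric. -/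
noncomputable def hdist (S : Set G) (A B : Set G) : ℕ∞ :=
  sInf {r : ℕ∞ | A ⊆ nbhd S r B ∧ B ⊆ nbhd S r A}

/-- The conjugate subgroup `g P g⁻¹`. -/
def conjSub (g : G) (P : Subgroup G) : Subgroup G := ConjAct.toConjAct g • P

/-- The collection of all left cosets `gP`, `g ∈ G`, `P ∈ Ps`, as subsets of `G`. -/
def cosetsOf (Ps : Set (Subgroup G)) : Set (Set G) :=
  {A | ∃ (g : G) (P : Subgroup G), P ∈ Ps ∧ A = g • (P : Set G)}

/-- A collection of subgroups is almost malnormal if any conjugate of a member meets any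
member in a finite subgroup, except for the trivial configurations. -/
def AlmostMalnormal (Ps : Set (Subgroup G)) : Prop :=
  ∀ P ∈ Ps, ∀ P' ∈ Ps, ∀ g : G,
    ((conjSub g P ⊓ P' : Subgroup G) : Set G).Finite ∨ (P = P' ∧ g ∈ P)

/-- A collection of subgroups is reduced if commensurability of a member with a conjugate of a
member only happens trivially. -/
def Reduced (Ps : Set (Subgroup G)) : Prop :=
  ∀ P ∈ Ps, ∀ Q ∈ Ps, ∀ g : G, Subgroup.Commensurable P (conjSub g Q) → P = Q ∧ g ∈ P

/-!
In a fine graph only finitely many paths of bounded length join two vertices `v ≠ w`: if `vu` and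
`vb` start two such paths, closing up through `v` a path from `u` to `b` that avoids `v` gives a
circuit of bounded length through the edge `vb`, so `u` ranges over a finite set. The pointwise
stabiliser of `v` and `w` permutes these paths, and its elements sending the second vertex of a
fixed path to a given vertex form a coset of an edge stabiliser; so it is finite. Hence
`g Stab(v) g⁻¹ ∩ Stab(w) = Stab(g v) ∩ Stab(w)` is infinite only if `g v = w`; then the two
representatives are conjugate, hence equal, and the same argument gives `g v = v`.
-/

theorem conjSub_stabilizer {V : Type*} [MulAction G V] (g : G) (v : V) :
    conjSub g (MulAction.stabilizer G v) = MulAction.stabilizer G (g • v) := by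
  rw [conjSub, MulAction.stabilizer_smul_eq_stabilizer_map_conj]
  rfl

namespace SimpleGraph

variable {V : Type*} {Γ : SimpleGraph V}

theorem Walk.setOf_nil_subsingleton (v w : V) : {p : Γ.Walk v w | p.Nil}.Subsingleton := by
  rintro (_ | _) hp (_ | _) hq <;> simp_all

theorem Fine.finite_setOf_adj_walk_avoiding_of_adj (hfine : Γ.Fine) {v b : V}
    (hvb : Γ.Adj v b) (n : ℕ) :
    {u | Γ.Adj v u ∧ ∃ p : Γ.Walk u b, v ∉ p.support ∧ p.length ≤ n}.Finite := by
  classical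
  refine (((hfine s(v, b) hvb (n + 2)).biUnion fun c _ => c.2.support.finite_toSet).insert
    b).subset ?_
  rintro u ⟨hvu, p, hvp, hpn⟩
  rcases eq_or_ne u b with rfl | hub
  · exact Set.mem_insert _ _
  have hvq : v ∉ p.bypass.support := fun h => hvp (p.support_bypass_subset_support h)
  let c := Walk.cons hvu (p.bypass.concat hvb.symm)
  have hc : c.IsCycle := by
    refine (Walk.cons_isCycle_iff _ _).2 ⟨p.bypass_isPath.concat hvq _, ?_⟩
    rw [Walk.edges_concat, List.concat_eq_append, List.mem_append, List.mem_singleton]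
    rintro (h | h)
    · exact hvq (p.bypass.fst_mem_support_of_mem_edges h)
    · exact hub (by simpa [hvb.ne] using h)
  refine Set.mem_insert_of_mem _ (Set.mem_biUnion (x := ⟨v, c⟩) ⟨hc, ?_, ?_⟩ ?_)
  · simp [c]
  · have := p.length_bypass_le_length
    simp only [c, Walk.length_cons, Walk.length_concat]
    omega
  · simp [c]

theorem Fine.finite_setOf_adj_walk_avoiding (hfine : Γ.Fine) (v w : V) (n : ℕ) :
    {u | Γ.Adj v u ∧ ∃ p : Γ.Walk u w, v ∉ p.support ∧ p.length ≤ n}.Finite := by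
  rcases Set.eq_empty_or_nonempty
      {u | Γ.Adj v u ∧ ∃ p : Γ.Walk u w, v ∉ p.support ∧ p.length ≤ n} with
    h | ⟨b, hvb, β, hvβ, hβ⟩
  · simp [h]
  refine (hfine.finite_setOf_adj_walk_avoiding_of_adj hvb (n + n)).subset ?_
  rintro u ⟨hvu, p, hvp, hp⟩
  refine ⟨hvu, p.append β.reverse, ?_, ?_⟩
  · simp [Walk.mem_support_append_iff, hvp, hvβ]
  · rw [Walk.length_append, Walk.length_reverse]
    omega

theorem Fine.finite_setOf_isPath_length_le (hfine : Γ.Fine) (n : ℕ) (v w : V) :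
    {p : Γ.Walk v w | p.IsPath ∧ p.length ≤ n}.Finite := by
  induction n generalizing v with
  | zero =>
    refine (Walk.setOf_nil_subsingleton v w).finite.subset ?_
    rintro p ⟨-, hp⟩
    exact Walk.length_eq_zero_iff.1 (Nat.le_zero.1 hp)
  | succ n ih =>
    refine ((Walk.setOf_nil_subsingleton v w).finite.union
      ((hfine.finite_setOf_adj_walk_avoiding v w n).biUnion fun u _ =>
        Set.finite_iUnion fun h => (ih u).image (Walk.cons h))).subset ?_
    rintro (_ | ⟨h, p⟩) ⟨hp, hpn⟩
    · exact Or.inl Walk.nil_nil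
    obtain ⟨hp, hvp⟩ := (Walk.cons_isPath_iff _ _).1 hp
    rw [Walk.length_cons] at hpn
    exact Or.inr (Set.mem_biUnion ⟨h, p, hvp, by omega⟩
      (Set.mem_iUnion.2 ⟨h, p, ⟨hp, by omega⟩, rfl⟩))

theorem Fine.finite_setOf_smul_eq_and_smul_eq [MulAction G V] (hfine : Γ.Fine)
    (hadj : ∀ (g : G) (a b : V), Γ.Adj a b → Γ.Adj (g • a) (g • b))
    (hstab : ∀ a b : V, Γ.Adj a b → {g : G | g • a = a ∧ g • b = b}.Finite)
    {a b : V} (hreach : Γ.Reachable a b) (hab : a ≠ b) :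
    {g : G | g • a = a ∧ g • b = b}.Finite := by
  obtain ⟨p, hp⟩ := hreach.exists_isPath
  cases p with
  | nil => exact absurd rfl hab
  | @cons _ u _ hau p' =>
  let φ (g : G) : Γ →g Γ := ⟨(g • ·), hadj g _ _⟩
  refine Set.Finite.of_finite_fibers (· • u) ?_ ?_
  · refine ((hfine.finite_setOf_isPath_length_le (p'.length + 1) a b).biUnion
      fun q _ => q.support.finite_toSet).subset ?_
    rintro _ ⟨g, ⟨hga, hgb⟩, rfl⟩
    refine Set.mem_biUnion (x := ((Walk.cons hau p').map (φ g)).copy hga hgb) ⟨?_, ?_⟩ ?_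
    · exact (Walk.isPath_copy _ _ _).2 (hp.map (MulAction.injective g))
    · simp
    · simp [φ]
  · rintro _ ⟨g₀, ⟨hg₀a, -⟩, rfl⟩
    refine ((hstab a u hau).image (g₀ * ·)).subset ?_
    rintro g ⟨⟨hga, -⟩, hgu : g • u = g₀ • u⟩
    refine ⟨g₀⁻¹ * g, ⟨?_, ?_⟩, mul_inv_cancel_left _ _⟩
    · rw [mul_smul, hga, inv_smul_eq_iff, hg₀a]
    · rw [mul_smul, hgu, inv_smul_smul]

theorem Connected.eq_of_not_finite_stabilizer_inf [MulAction G V] (hconn : Γ.Connected)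
    (hfine : Γ.Fine) (hadj : ∀ (g : G) (a b : V), Γ.Adj a b → Γ.Adj (g • a) (g • b))
    (hstab : ∀ a b : V, Γ.Adj a b → {g : G | g • a = a ∧ g • b = b}.Finite) {x y : V}
    (h : ¬ ((MulAction.stabilizer G x ⊓ MulAction.stabilizer G y : Subgroup G) : Set G).Finite) :
    x = y := by
  by_contra hxy
  exact h (hfine.finite_setOf_smul_eq_and_smul_eq hadj hstab (hconn x y) hxy)

end SimpleGraph

theorem almostMalnormal_of_action_on_fine_graph_general {V : Type*} [MulAction G V]
    (Γ : SimpleGraph V) (hconn : Γ.Connected) (hfine : Γ.Fine)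
    (hadj : ∀ (g : G) (a b : V), Γ.Adj a b → Γ.Adj (g • a) (g • b))
    (hstab : ∀ a b : V, Γ.Adj a b → {g : G | g • a = a ∧ g • b = b}.Finite)
    (Ps : Set (Subgroup G))
    (hrep : ∀ P ∈ Ps, ∃ v : V, P = MulAction.stabilizer G v)
    (huniq : ∀ P ∈ Ps, ∀ P' ∈ Ps, (∃ g : G, conjSub g P = P') → P = P') :
    AlmostMalnormal Ps := by
  intro P hP P' hP' g
  obtain ⟨v, rfl⟩ := hrep P hP
  obtain ⟨w, rfl⟩ := hrep P' hP'
  refine or_iff_not_imp_left.2 fun hinf => ?_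
  rw [conjSub_stabilizer] at hinf
  have hgv : g • v = w := hconn.eq_of_not_finite_stabilizer_inf hfine hadj hstab hinf
  have hvw : MulAction.stabilizer G v = MulAction.stabilizer G w :=
    huniq _ hP _ hP' ⟨g, by rw [conjSub_stabilizer, hgv]⟩
  rw [← hvw] at hinf
  exact ⟨hvw, hconn.eq_of_not_finite_stabilizer_inf hfine hadj hstab hinf⟩

/-- If `G` acts on a connected fine graph with finite edge stabilisers and
`Ps` is a set of representatives of conjugacy classes of vertex stabilisers, then `Ps` is an
almost malnormal collection. -/
theorem almostMalnormal_of_action_on_fine_graph {V : Type*} [MulAction G V]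
    (Γ : SimpleGraph V) (hconn : Γ.Connected) (hfine : Γ.Fine)
    (hadj : ∀ (g : G) (a b : V), Γ.Adj a b → Γ.Adj (g • a) (g • b))
    (hstab : ∀ a b : V, Γ.Adj a b → {g : G | g • a = a ∧ g • b = b}.Finite)
    (Ps : Set (Subgroup G))
    (hrep : ∀ P ∈ Ps, ∃ v : V, P = MulAction.stabilizer G v)
    (hall : ∀ v : V, ∃ P ∈ Ps, ∃ g : G, conjSub g P = MulAction.stabilizer G v)
    (huniq : ∀ P ∈ Ps, ∀ P' ∈ Ps, (∃ g : G, conjSub g P = P') → P = P') :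
    AlmostMalnormal Ps :=
  almostMalnormal_of_action_on_fine_graph_general Γ hconn hfine hadj hstab Ps hrep huniq
end
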